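/- The task selection game (finitely many players, each with a finite set of available task-time routes, payoffs given by equally-shared task rewards minus movement costs) possesses the finite improvement property: asynchronous better-response updates always converge to a pure Nash equilibrium in finitely many steps, regardless of the initial profile or updating order. -/
import Mathlib


open Finset

section TSG

variable {ι : Type*} [Fintype ι] [DecidableEq ι]   -- players
variable {P : Type*} [Fintype P] [DecidableEq P]   -- task-time points
variable {R : ι → Type*}                            -- routes of each player
variable {Edge : ι → Type*}                         -- possible edges of each player

/-- Number of players whose route passes through the task-time point `p`. -/
noncomputable def mult (V : ∀ i, R i → Finset P) (r : ∀ i, R i) (p : P) : ℕ :=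
  (Finset.univ.filter fun j => p ∈ V j (r j)).card

/-- Payoff of player `i`: equally shared rewards of visited task-time points
minus total movement cost along the traversed edges. -/
noncomputable def payoff (ρ : P → ℝ) (V : ∀ i, R i → Finset P)
    (E : ∀ i, R i → Finset (Edge i)) (g : ∀ i, Edge i → ℝ)
    (i : ι) (r : ∀ i, R i) : ℝ :=
  (∑ p ∈ V i (r i), ρ p / (mult V r p : ℝ)) - ∑ e ∈ E i (r i), g i e

/-- A better-response update: a single player deviates and strictly increases
her payoff. -/
noncomputable def BetterResponseStep (ρ : P → ℝ) (V : ∀ i, R i → Finset P)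
    (E : ∀ i, R i → Finset (Edge i)) (g : ∀ i, Edge i → ℝ)
    (r r' : ∀ i, R i) : Prop :=
  ∃ i, ∃ ri' : R i, r' = Function.update r i ri' ∧
    payoff ρ V E g i r' > payoff ρ V E g i r

/-- A pure Nash equilibrium of the task selection game. -/
noncomputable def IsPureNash (ρ : P → ℝ) (V : ∀ i, R i → Finset P)
    (E : ∀ i, R i → Finset (Edge i)) (g : ∀ i, Edge i → ℝ)
    (r : ∀ i, R i) : Prop :=
  ∀ i, ∀ ri' : R i,
    payoff ρ V E g i (Function.update r i ri') ≤ payoff ρ V E g i r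

/-- Number of players other than `i` whose route passes through `p`. -/
noncomputable def otherMult (V : ∀ i, R i → Finset P) (i : ι) (r : ∀ i, R i) (p : P) : ℕ :=
  ((Finset.univ.erase i).filter fun j => p ∈ V j (r j)).card

lemma mult_eq_otherMult (V : ∀ i, R i → Finset P) (i : ι) (r : ∀ i, R i) (p : P) :
    mult V r p = otherMult V i r p + (if p ∈ V i (r i) then 1 else 0) := by
  classical
  unfold mult otherMult
  have h : (Finset.univ : Finset ι) = insert i (Finset.univ.erase i) :=
    (Finset.insert_erase (Finset.mem_univ i)).symm
  rw [h, Finset.filter_insert]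
  split
  · rw [Finset.card_insert_of_notMem (by simp), Finset.erase_insert (Finset.notMem_erase i _)]
  · simp

lemma otherMult_update (V : ∀ i, R i → Finset P) (i : ι) (r : ∀ i, R i) (ri' : R i) (p : P) :
    otherMult V i (Function.update r i ri') p = otherMult V i r p := by
  classical
  unfold otherMult
  congr 1
  apply Finset.filter_congr
  intro j hj
  rw [Function.update_of_ne (Finset.ne_of_mem_erase hj)]

/-- Rosenthal-style partial sum. -/
noncomputable def Fsum (ρ : P → ℝ) (p : P) (n : ℕ) : ℝ :=
  ∑ k ∈ Finset.range n, ρ p / (k + 1 : ℝ)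

lemma Fsum_mult (ρ : P → ℝ) (V : ∀ i, R i → Finset P) (i : ι) (r : ∀ i, R i) (p : P) :
    Fsum ρ p (mult V r p) =
      Fsum ρ p (otherMult V i r p) +
        (if p ∈ V i (r i) then ρ p / (mult V r p : ℝ) else 0) := by
  classical
  rw [mult_eq_otherMult V i r p]
  split
  · simp only [Fsum, Finset.sum_range_succ]
    push_cast
    ring
  · simp [Fsum]

/-- The exact potential of the game. -/
noncomputable def potential (ρ : P → ℝ) (V : ∀ i, R i → Finset P)
    (E : ∀ i, R i → Finset (Edge i)) (g : ∀ i, Edge i → ℝ) (r : ∀ i, R i) : ℝ :=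
  (∑ p : P, Fsum ρ p (mult V r p)) - ∑ j : ι, ∑ e ∈ E j (r j), g j e

lemma payoff_eq_potential_add (ρ : P → ℝ) (V : ∀ i, R i → Finset P)
    (E : ∀ i, R i → Finset (Edge i)) (g : ∀ i, Edge i → ℝ)
    (i : ι) (r : ∀ i, R i) :
    potential ρ V E g r = payoff ρ V E g i r +
      ((∑ p : P, Fsum ρ p (otherMult V i r p)) -
        ∑ j ∈ Finset.univ.erase i, ∑ e ∈ E j (r j), g j e) := by
  classical
  unfold potential payoff
  have h1 : (∑ p : P, Fsum ρ p (mult V r p)) =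
      (∑ p : P, Fsum ρ p (otherMult V i r p)) +
        ∑ p : P, (if p ∈ V i (r i) then ρ p / (mult V r p : ℝ) else 0) := by
    rw [← Finset.sum_add_distrib]
    exact Finset.sum_congr rfl fun p _ => Fsum_mult ρ V i r p
  have h2 : (∑ p : P, (if p ∈ V i (r i) then ρ p / (mult V r p : ℝ) else 0)) =
      ∑ p ∈ V i (r i), ρ p / (mult V r p : ℝ) := by
    rw [Finset.sum_ite_mem, Finset.univ_inter]
  have h3 : (∑ j : ι, ∑ e ∈ E j (r j), g j e) =
      (∑ e ∈ E i (r i), g i e) + ∑ j ∈ Finset.univ.erase i, ∑ e ∈ E j (r j), g j e := by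
    rw [← Finset.add_sum_erase _ _ (Finset.mem_univ i)]
  rw [h1, h2, h3]
  ring

lemma potential_lt_of_step (ρ : P → ℝ) (V : ∀ i, R i → Finset P)
    (E : ∀ i, R i → Finset (Edge i)) (g : ∀ i, Edge i → ℝ)
    (r r' : ∀ i, R i) (h : BetterResponseStep ρ V E g r r') :
    potential ρ V E g r < potential ρ V E g r' := by
  classical
  obtain ⟨i, ri', hr', hlt⟩ := h
  have key : ((∑ p : P, Fsum ρ p (otherMult V i r' p)) -
        ∑ j ∈ Finset.univ.erase i, ∑ e ∈ E j (r' j), g j e) =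
      ((∑ p : P, Fsum ρ p (otherMult V i r p)) -
        ∑ j ∈ Finset.univ.erase i, ∑ e ∈ E j (r j), g j e) := by
    subst hr'
    congr 1
    · exact Finset.sum_congr rfl fun p _ => by rw [otherMult_update V i r ri' p]
    · refine Finset.sum_congr rfl fun j hj => ?_
      rw [Function.update_of_ne (Finset.ne_of_mem_erase hj)]
  rw [payoff_eq_potential_add ρ V E g i r, payoff_eq_potential_add ρ V E g i r', key]
  linarith

/-- The task selection game has the finite improvement property:
there is no infinite sequence of better-response updates, and any profile
admitting no further better-response update is a pure Nash equilibrium;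
hence asynchronous better-response updates always reach a pure Nash
equilibrium in finitely many steps. -/
theorem tsg_finite_improvement_property [∀ i, Fintype (R i)] [∀ i, Nonempty (R i)]
    (ρ : P → ℝ) (hρ : ∀ p, 0 ≤ ρ p)
    (V : ∀ i, R i → Finset P)
    (E : ∀ i, R i → Finset (Edge i)) (g : ∀ i, Edge i → ℝ)
    (hg : ∀ i e, 0 ≤ g i e) :
    (¬ ∃ p : ℕ → (∀ i, R i), ∀ n, BetterResponseStep ρ V E g (p n) (p (n + 1))) ∧
    (∀ r : ∀ i, R i, (¬ ∃ r', BetterResponseStep ρ V E g r r') →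
      IsPureNash ρ V E g r) := by
  classical
  constructor
  · rintro ⟨p, hp⟩
    have hmono : StrictMono fun n => potential ρ V E g (p n) :=
      strictMono_nat_of_lt_succ fun n => potential_lt_of_step ρ V E g _ _ (hp n)
    have hinj : Function.Injective p :=
      fun a b hab => hmono.injective (by simp [hab])
    haveI : Finite ℕ := Finite.of_injective p hinj
    exact not_finite ℕ
  · intro r h i ri'
    by_contra hlt
    push_neg at hlt
    exact h ⟨Function.update r i ri', i, ri', rfl, hlt⟩

end TSG
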